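/- arXiv:2003.04149 — 6 statements merged into one kernel-verified Lean document; each statement's English description precedes it below -/
import Mathlib

section
/- Let (H, μ) be a commutative Hilbertian Frobenius semigroup. Then the set G(H,μ) of group-like elements (nonzero x with μ†(x) = x ⊗ x) is an orthogonal family: any two distinct group-like elements are orthogonal, and the product of any two distinct group-like elements satisfies ⟨xy, z⟩ = 0 for every group-like z. -/
open scoped ComplexInnerProductSpace

/-- `x` is group-like for the multiplication `m`: `x ≠ 0` and `μ†(x) = x ⊗ x`,
expressed equivalently as `⟨μ(u ⊗ v), x⟩ = ⟨u, x⟩⟨v, x⟩` for all `u v`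
(in Mathlib's convention, conjugate-linear in the first slot). -/
def IsGrouplike {H : Type*} [NormedAddCommGroup H] [InnerProductSpace ℂ H]
    (m : H →L[ℂ] H →L[ℂ] H) (x : H) : Prop :=
  x ≠ 0 ∧ ∀ u v : H, ⟪x, m u v⟫ = ⟪x, u⟫ * ⟪x, v⟫

lemma aux_grouplike {H : Type*} [NormedAddCommGroup H] [InnerProductSpace ℂ H] [CompleteSpace H]
    (m : H →L[ℂ] H →L[ℂ] H)
    (hcomm : ∀ u v : H, m u v = m v u)
    (hassoc : ∀ u v w : H, m (m u v) w = m u (m v w))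
    (hfrob : ∀ u : H, ∃ us : H, ∀ v w : H, ⟪m u v, w⟫ = ⟪v, m us w⟫)
    (x y : H) (hx : IsGrouplike m x) (hy : IsGrouplike m y)
    (hxy : ⟪x, y⟫ ≠ 0) : ⟪x, y⟫ = ⟪x, x⟫ := by
  obtain ⟨xs, hxs⟩ := hfrob x
  have hA : ∀ z : H, IsGrouplike m z → m xs z = ⟪x, z⟫ • z := by
    intro z hz
    apply ext_inner_left ℂ
    intro v
    rw [← hxs v z, inner_smul_right]
    have h := congrArg (starRingEnd ℂ) (hz.2 x v)
    simpa [inner_conj_symm, map_mul] using h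
  have h1 : m xs (m x y) = ⟪x, x⟫ • m x y := by
    rw [← hassoc, hA x hx]
    simp
  have h2 : m xs (m x y) = ⟪x, y⟫ • m x y := by
    rw [hcomm x y, ← hassoc, hA y hy]
    simp [hcomm y x]
  have hne : m x y ≠ 0 := by
    intro h0
    apply hxy
    have h := hx.2 x y
    rw [h0, inner_zero_right] at h
    have hxx : ⟪x, x⟫ ≠ 0 := by
      simpa [inner_self_eq_zero] using hx.1
    exact (mul_eq_zero.mp h.symm).resolve_left hxx
  have h3 : (⟪x, x⟫ - ⟪x, y⟫) • m x y = 0 := by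
    rw [sub_smul, ← h1, ← h2, sub_self]
  rcases smul_eq_zero.mp h3 with h | h
  · exact (sub_eq_zero.mp h).symm
  · exact absurd h hne

/-- In a commutative Hilbertian Frobenius semigroup (Frobenius condition
via the equivalent `H*`-adjoint formulation), distinct group-like elements are
orthogonal, and the product of two distinct group-like elements is orthogonal to
every group-like element. -/
theorem stmt_7 {H : Type*} [NormedAddCommGroup H] [InnerProductSpace ℂ H] [CompleteSpace H]
    (m : H →L[ℂ] H →L[ℂ] H)
    (hcomm : ∀ u v : H, m u v = m v u)
    (hassoc : ∀ u v w : H, m (m u v) w = m u (m v w))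
    (hfrob : ∀ u : H, ∃ us : H, ∀ v w : H, ⟪m u v, w⟫ = ⟪v, m us w⟫) :
    (∀ x y : H, IsGrouplike m x → IsGrouplike m y → x ≠ y → ⟪x, y⟫ = 0) ∧
    (∀ x y z : H, IsGrouplike m x → IsGrouplike m y → IsGrouplike m z →
      x ≠ y → ⟪m x y, z⟫ = 0) := by
  have main : ∀ x y : H, IsGrouplike m x → IsGrouplike m y → x ≠ y → ⟪x, y⟫ = 0 := by
    intro x y hx hy hne
    by_contra h
    have h1 : ⟪x, y⟫ = ⟪x, x⟫ := aux_grouplike m hcomm hassoc hfrob x y hx hy h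
    have h' : ⟪y, x⟫ ≠ 0 := fun h0 => h (by rw [← inner_conj_symm x y, h0, map_zero])
    have h2 : ⟪y, x⟫ = ⟪y, y⟫ := aux_grouplike m hcomm hassoc hfrob y x hy hx h'
    apply hne
    rw [← sub_eq_zero, ← inner_self_eq_zero (𝕜 := ℂ)]
    rw [inner_sub_sub_self, h1, h2]
    ring
  refine ⟨main, ?_⟩
  intro x y z hx hy hz hne
  rw [← inner_conj_symm, hz.2 x y, map_mul]
  by_cases hzx : z = x
  · subst hzx
    rw [main z y hx hy hne]
    simp
  · rw [main z x hz hx hzx]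
    simp
end

section
/- Let (H, μ) be a commutative Hilbertian Frobenius semigroup and x a group-like element. Then x² := μ(x ⊗ x) equals ‖x‖²·x. Consequently x/‖x‖² is idempotent and ‖x‖ ≤ ‖μ‖_op. -/
open scoped ComplexInnerProductSpace

/-- In a commutative Hilbertian Frobenius semigroup (Frobenius via the
equivalent `H*`-adjoint formulation), a group-like element `x` satisfies
`x² = ‖x‖² x`; hence `x/‖x‖²` is idempotent and `‖x‖ ≤ ‖μ‖`. -/
theorem stmt_8 {H : Type*} [NormedAddCommGroup H] [InnerProductSpace ℂ H] [CompleteSpace H]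
    (m : H →L[ℂ] H →L[ℂ] H)
    (hcomm : ∀ u v : H, m u v = m v u)
    (hassoc : ∀ u v w : H, m (m u v) w = m u (m v w))
    (hfrob : ∀ u : H, ∃ us : H, ∀ v w : H, ⟪m u v, w⟫ = ⟪v, m us w⟫)
    (x : H) (hx : IsGrouplike m x) :
    m x x = ((‖x‖ : ℂ) ^ 2) • x ∧
    m (((‖x‖ : ℂ) ^ 2)⁻¹ • x) (((‖x‖ : ℂ) ^ 2)⁻¹ • x) = ((‖x‖ : ℂ) ^ 2)⁻¹ • x ∧
    ‖x‖ ≤ ‖m‖ := by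
  obtain ⟨hx0, hgl⟩ := hx
  obtain ⟨xs, hxs⟩ := hfrob x
  have hnx : ‖x‖ ≠ 0 := norm_ne_zero_iff.mpr hx0
  have hnxC : ((‖x‖ : ℂ) ^ 2) ≠ 0 :=
    pow_ne_zero _ (Complex.ofReal_ne_zero.mpr hnx)
  set c : ℂ := ⟪x, xs⟫ with hc
  have h1 : ∀ y : H, ⟪m x x, y⟫ = c * ⟪x, y⟫ := by
    intro y
    rw [hxs x y, hgl xs y]
  have h2 : ∀ y : H, ⟪y, m x x⟫ = (starRingEnd ℂ) c * ⟪y, x⟫ := by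
    intro y
    rw [← inner_conj_symm, h1, map_mul]
    simp [inner_conj_symm]
  have hxx : ⟪x, x⟫ = ((‖x‖ : ℂ) ^ 2) := by
    rw [inner_self_eq_norm_sq_to_K]
    norm_cast
  have h3 : (starRingEnd ℂ) c = (‖x‖ : ℂ) ^ 2 := by
    have e1 := (h2 x).symm.trans (hgl x x)
    rw [hxx] at e1
    exact mul_right_cancel₀ hnxC e1
  have hmain : m x x = ((‖x‖ : ℂ) ^ 2) • x := by
    apply ext_inner_left ℂ
    intro y
    rw [h2 y, h3, inner_smul_right]
  refine ⟨hmain, ?_, ?_⟩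
  · simp only [map_smul, ContinuousLinearMap.smul_apply, hmain, smul_smul]
    congr 1
    field_simp
  · have hle : ‖m x x‖ ≤ ‖m‖ * ‖x‖ * ‖x‖ := by
      calc ‖m x x‖ ≤ ‖m x‖ * ‖x‖ := (m x).le_opNorm x
        _ ≤ ‖m‖ * ‖x‖ * ‖x‖ :=
          mul_le_mul_of_nonneg_right (m.le_opNorm x) (norm_nonneg x)
    have hnorm : ‖m x x‖ = ‖x‖ ^ 2 * ‖x‖ := by
      rw [hmain, norm_smul]
      simp [norm_pow]
    rw [hnorm] at hle
    have hpos : 0 < ‖x‖ := lt_of_le_of_ne (norm_nonneg x) (Ne.symm hnx)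
    have h4 : ‖x‖ * (‖x‖ * ‖x‖) ≤ ‖m‖ * (‖x‖ * ‖x‖) := by nlinarith
    exact le_of_mul_le_mul_right h4 (mul_pos hpos hpos)
end

section
/- Let (H, μ) be a commutative Hilbertian Frobenius semigroup and let x, y be distinct group-like elements. Then μ(x ⊗ y) = 0. -/
open scoped ComplexInnerProductSpace

lemma conj_norm_sq {H : Type*} [NormedAddCommGroup H] [InnerProductSpace ℂ H] (x : H)
    (n : ℕ) : (starRingEnd ℂ) ((‖x‖ : ℂ) ^ n) = (‖x‖ : ℂ) ^ n := by simp

lemma grouplike_star {H : Type*} [NormedAddCommGroup H] [InnerProductSpace ℂ H]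
    (m : H →L[ℂ] H →L[ℂ] H) (x xs : H) (hx : IsGrouplike m x)
    (hxs : ∀ v w : H, ⟪m x v, w⟫ = ⟪v, m xs w⟫) :
    m xs x = ((‖x‖ : ℂ)^2) • x := by
  apply ext_inner_left ℂ
  intro v
  have h1 : ⟪v, m xs x⟫ = ⟪m x v, x⟫ := (hxs v x).symm
  have h2 : ⟪m x v, x⟫ = starRingEnd ℂ ⟪x, m x v⟫ := by rw [inner_conj_symm]
  rw [h1, h2, hx.2, inner_self_eq_norm_sq_to_K, inner_smul_right, map_mul,
    inner_conj_symm]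
  simp only [map_pow, RCLike.conj_ofReal]
  norm_cast

lemma grouplike_sq {H : Type*} [NormedAddCommGroup H] [InnerProductSpace ℂ H]
    (m : H →L[ℂ] H →L[ℂ] H)
    (hassoc : ∀ u v w : H, m (m u v) w = m u (m v w))
    (hfrob : ∀ u : H, ∃ us : H, ∀ v w : H, ⟪m u v, w⟫ = ⟪v, m us w⟫)
    (x : H) (hx : IsGrouplike m x) :
    m x x = ((‖x‖ : ℂ)^2) • x := by
  obtain ⟨xs, hxs⟩ := hfrob x
  have hselfx : ⟪x, x⟫ = (‖x‖ : ℂ)^2 := inner_self_eq_norm_sq_to_K x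
  have hstar := grouplike_star m x xs hx hxs
  have hxz : ⟪x, m x x⟫ = (‖x‖ : ℂ)^4 := by
    rw [hx.2, hselfx]; ring
  have hzx : ⟪m x x, x⟫ = (‖x‖ : ℂ)^4 := by
    rw [← inner_conj_symm, hxz, conj_norm_sq]
  have hzz : ⟪m x x, m x x⟫ = (‖x‖ : ℂ)^6 := by
    rw [hxs x (m x x), ← hassoc, hstar]
    simp only [map_smul, ContinuousLinearMap.smul_apply, inner_smul_right, hxz]
    ring
  have hzero : ⟪m x x - ((‖x‖ : ℂ)^2) • x, m x x - ((‖x‖ : ℂ)^2) • x⟫ = 0 := by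
    rw [inner_sub_left, inner_sub_right, inner_sub_right, inner_smul_left,
      inner_smul_right, inner_smul_left, inner_smul_right, hzz, hxz, hzx, hselfx,
      conj_norm_sq]
    ring
  exact sub_eq_zero.mp (inner_self_eq_zero.mp hzero)

/-- In a commutative Hilbertian Frobenius semigroup (Frobenius via the
equivalent `H*`-adjoint formulation), the product of two distinct group-like elements
is zero. -/
theorem stmt_9 {H : Type*} [NormedAddCommGroup H] [InnerProductSpace ℂ H] [CompleteSpace H]
    (m : H →L[ℂ] H →L[ℂ] H)
    (hcomm : ∀ u v : H, m u v = m v u)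
    (hassoc : ∀ u v w : H, m (m u v) w = m u (m v w))
    (hfrob : ∀ u : H, ∃ us : H, ∀ v w : H, ⟪m u v, w⟫ = ⟪v, m us w⟫)
    (x y : H) (hx : IsGrouplike m x) (hy : IsGrouplike m y) (hxy : x ≠ y) :
    m x y = 0 := by
  have hxsq := grouplike_sq m hassoc hfrob x hx
  have hysq := grouplike_sq m hassoc hfrob y hy
  have hselfx : ⟪x, x⟫ = (‖x‖ : ℂ)^2 := inner_self_eq_norm_sq_to_K x
  have hselfy : ⟪y, y⟫ = (‖y‖ : ℂ)^2 := inner_self_eq_norm_sq_to_K y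
  have horth : ⟪y, x⟫ = 0 := by
    by_contra hb
    have h1 : ⟪y, x⟫ * ⟪y, x⟫ = (‖x‖ : ℂ)^2 * ⟪y, x⟫ := by
      rw [← hy.2 x x, hxsq, inner_smul_right]
    have h2 : ⟪x, y⟫ * ⟪x, y⟫ = (‖y‖ : ℂ)^2 * ⟪x, y⟫ := by
      rw [← hx.2 y y, hysq, inner_smul_right]
    have hbx : ⟪y, x⟫ = (‖x‖ : ℂ)^2 := mul_right_cancel₀ hb h1
    have hxy0 : ⟪x, y⟫ ≠ 0 := by
      intro h
      apply hb
      rw [← inner_conj_symm, h, map_zero]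
    have hby : ⟪x, y⟫ = (‖y‖ : ℂ)^2 := mul_right_cancel₀ hxy0 h2
    have hxyc : ⟪x, y⟫ = (‖x‖ : ℂ)^2 := by
      rw [← inner_conj_symm, hbx, conj_norm_sq]
    have hnorm : (‖y‖ : ℂ)^2 = (‖x‖ : ℂ)^2 := by rw [← hby, hxyc]
    have hz : ⟪x - y, x - y⟫ = 0 := by
      rw [inner_sub_left, inner_sub_right, inner_sub_right, hselfx, hselfy,
        hbx, hxyc, hnorm]
      ring
    exact hxy (sub_eq_zero.mp (inner_self_eq_zero.mp hz))
  obtain ⟨xs, hxs⟩ := hfrob x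
  have hstar := grouplike_star m x xs hx hxs
  have hzz : ⟪m x y, m x y⟫ = 0 := by
    rw [hxs y (m x y), ← hassoc, hstar]
    simp only [map_smul, ContinuousLinearMap.smul_apply, inner_smul_right, hy.2, horth]
    ring
  exact inner_self_eq_zero.mp hzz
end

section
/- Let (H, μ) be a commutative Hilbertian Frobenius semigroup. Then the Jacobson radical of (H, μ) equals its annihilator: J(H, μ) = { u ∈ H : μ(u ⊗ v) = 0 for all v ∈ H }. -/
open scoped ComplexInnerProductSpace

/-!
The multiplication operators `M_v = m v` commute, so they generate a commutative closed subalgebra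
of `H →L[ℂ] H`. A point of the spectrum of `M_u` is the value at `M_u` of a character of that
algebra, and pulling the character back along `v ↦ M_v` gives a continuous multiplicative
functional `f` on `H`. By Riesz, `f = ⟪x, ·⟫` with `x` zero or group-like, so if `u` is orthogonal
to all group-likes then `M_u` is quasi-nilpotent. The Frobenius condition says `M_u† = M_{u*}`,
which commutes with `M_u`; a normal operator with spectrum `{0}` vanishes.
Conversely, `⟪x, u⟫² = ⟪x, u u⟫` for a group-like `x`.
-/

theorem exists_continuous_algHom_adjoin_apply_eq {A : Type*} [NormedRing A] [NormedAlgebra ℂ A]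
    [CompleteSpace A] {S : Set A} (hS : ∀ a ∈ S, ∀ b ∈ S, a * b = b * a) {a : A} (ha : a ∈ S)
    {z : ℂ} (hz : z ∈ spectrum ℂ a) :
    ∃ φ : Algebra.adjoin ℂ S →ₐ[ℂ] ℂ, Continuous φ ∧ φ ⟨a, Algebra.subset_adjoin ha⟩ = z := by
  set C := (Algebra.adjoin ℂ S).topologicalClosure
  have hle := (Algebra.adjoin ℂ S).le_topologicalClosure
  have hcomm := (Algebra.isMulCommutative_adjoin ℂ hS).is_comm
  let : NormedCommRing C :=
    { (Algebra.adjoin ℂ S).commRingTopologicalClosure hcomm.comm,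
      (inferInstance : NormedRing C) with }
  have : CompleteSpace C := (Subalgebra.isClosed_topologicalClosure _).completeSpace_coe
  obtain ⟨χ, hχ⟩ := WeakDual.CharacterSpace.mem_spectrum_iff_exists.mp
    (spectrum.subset_subalgebra (s := C) ⟨a, hle (Algebra.subset_adjoin ha)⟩ hz)
  exact ⟨(WeakDual.CharacterSpace.toAlgHom χ).comp (Subalgebra.inclusion hle),
    χ.1.continuous.comp (continuous_inclusion hle), hχ⟩

section Multiplication

variable {H : Type*} [NormedAddCommGroup H] [NormedSpace ℂ H] {m : H →L[ℂ] H →L[ℂ] H}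

theorem mul_eq_apply_of_assoc (hassoc : ∀ u v w : H, m (m u v) w = m u (m v w)) (u v : H) :
    m u * m v = m (m u v) := by
  ext w
  exact (hassoc u v w).symm

theorem mul_comm_of_comm_assoc (hcomm : ∀ u v : H, m u v = m v u)
    (hassoc : ∀ u v w : H, m (m u v) w = m u (m v w)) (u v : H) :
    m u * m v = m v * m u := by
  rw [mul_eq_apply_of_assoc hassoc, mul_eq_apply_of_assoc hassoc, hcomm]

theorem exists_multiplicative_apply_eq_of_mem_spectrum [CompleteSpace H]
    (hcomm : ∀ u v : H, m u v = m v u) (hassoc : ∀ u v w : H, m (m u v) w = m u (m v w))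
    {u : H} {z : ℂ} (hz : z ∈ spectrum ℂ (m u)) :
    ∃ f : H →L[ℂ] ℂ, (∀ v w : H, f (m v w) = f v * f w) ∧ f u = z := by
  obtain ⟨φ, hφ, rfl⟩ := exists_continuous_algHom_adjoin_apply_eq (S := Set.range m)
    (by rintro _ ⟨v, rfl⟩ _ ⟨w, rfl⟩; exact mul_comm_of_comm_assoc hcomm hassoc v w) ⟨u, rfl⟩ hz
  let ι : H →ₗ[ℂ] Algebra.adjoin ℂ (Set.range m) :=
    (m : H →ₗ[ℂ] H →L[ℂ] H).codRestrict (Algebra.adjoin ℂ (Set.range m)).toSubmodule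
      fun v => Algebra.subset_adjoin ⟨v, rfl⟩
  refine ⟨⟨φ.toLinearMap ∘ₗ ι, hφ.comp (m.continuous.subtype_mk _)⟩, fun v w => ?_, rfl⟩
  change φ _ = φ _ * φ _
  rw [← map_mul]
  congr 1
  exact Subtype.ext (mul_eq_apply_of_assoc hassoc v w).symm

end Multiplication

section Hilbert

variable {H : Type*} [NormedAddCommGroup H] [InnerProductSpace ℂ H] {m : H →L[ℂ] H →L[ℂ] H}

theorem IsGrouplike.inner_eq_zero_of_apply_self_eq_zero {x u : H} (hx : IsGrouplike m x)
    (hu : m u u = 0) : ⟪x, u⟫ = 0 := by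
  have := hx.2 u u
  rwa [hu, inner_zero_right, zero_eq_mul_self] at this

theorem isGrouplike_toDual_symm [CompleteSpace H] {f : H →L[ℂ] ℂ} (hf0 : f ≠ 0)
    (hf : ∀ v w : H, f (m v w) = f v * f w) :
    IsGrouplike m ((InnerProductSpace.toDual ℂ H).symm f) := by
  refine ⟨by simpa using hf0, fun v w => ?_⟩
  simp only [InnerProductSpace.toDual_symm_apply, hf]

theorem spectrum_subset_zero_of_forall_isGrouplike [CompleteSpace H]
    (hcomm : ∀ u v : H, m u v = m v u) (hassoc : ∀ u v w : H, m (m u v) w = m u (m v w))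
    {u : H} (hu : ∀ x : H, IsGrouplike m x → ⟪x, u⟫ = 0) : spectrum ℂ (m u) ⊆ {0} := by
  intro z hz
  obtain ⟨f, hf, rfl⟩ := exists_multiplicative_apply_eq_of_mem_spectrum hcomm hassoc hz
  by_cases hf0 : f = 0
  · simp [hf0]
  · rw [← InnerProductSpace.toDual_symm_apply]
    exact hu _ (isGrouplike_toDual_symm hf0 hf)

theorem isStarNormal_of_inner_apply_eq [CompleteSpace H] (hcomm : ∀ u v : H, m u v = m v u)
    (hassoc : ∀ u v w : H, m (m u v) w = m u (m v w)) {u us : H}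
    (hus : ∀ v w : H, ⟪m u v, w⟫ = ⟪v, m us w⟫) : IsStarNormal (m u) := by
  have hadj : m u = star (m us) := ((m u).eq_adjoint_iff (m us)).mpr hus
  rw [isStarNormal_iff, hadj, star_star, ← hadj]
  exact mul_comm_of_comm_assoc hcomm hassoc us u

end Hilbert

/-- In a commutative Hilbertian Frobenius semigroup (Frobenius via the
equivalent `H*`-adjoint formulation), the Jacobson radical — which coincides with the
orthogonal complement of the set of group-like elements — equals the annihilator
`{u : uv = 0 for all v}`. -/
theorem stmt_11 {H : Type*} [NormedAddCommGroup H] [InnerProductSpace ℂ H] [CompleteSpace H]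
    (m : H →L[ℂ] H →L[ℂ] H)
    (hcomm : ∀ u v : H, m u v = m v u)
    (hassoc : ∀ u v w : H, m (m u v) w = m u (m v w))
    (hfrob : ∀ u : H, ∃ us : H, ∀ v w : H, ⟪m u v, w⟫ = ⟪v, m us w⟫) :
    {u : H | ∀ x : H, IsGrouplike m x → ⟪x, u⟫ = 0} =
      {u : H | ∀ v : H, m u v = 0} := by
  ext u
  refine ⟨fun hu => ?_, fun hu x hx => hx.inner_eq_zero_of_apply_self_eq_zero (hu u)⟩
  obtain ⟨us, hus⟩ := hfrob u
  have : IsStarNormal (m u) := isStarNormal_of_inner_apply_eq hcomm hassoc hus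
  have hzero : m u = 0 :=
    CFC.eq_zero_of_spectrum_subset_zero (R := ℂ) (m u)
      (spectrum_subset_zero_of_forall_isGrouplike hcomm hassoc hu)
  simp [hzero]
end

section
/- Let X be a nonempty set, w : X → ℝ with w(x) ≥ C > 0 for all x, and define μ_X on ℓ²_w(X) by pointwise multiplication: μ_X(f ⊗ g) = f·g. Then pointwise multiplication is a weak Hilbert–Schmidt bilinear map, μ_X is bounded with ‖μ_X‖_op ≤ C^{-1/2}, and the group-like elements of (ℓ²_w(X), μ_X) are exactly { δ_x / w(x) : x ∈ X }, where δ_x is the indicator function of x. -/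
/-- Membership in the weighted space `ℓ²_w(X)`. -/
def MemL2w {X : Type*} (w : X → ℝ) (f : X → ℂ) : Prop :=
  Summable fun x => w x * ‖f x‖ ^ 2

/-- The weighted inner product `⟨f, g⟩_w = Σ_x w x · conj (f x) · g x`
(Mathlib convention: conjugate-linear in the first slot). -/
noncomputable def winner {X : Type*} (w : X → ℝ) (f g : X → ℂ) : ℂ :=
  ∑' x, (w x : ℂ) * (starRingEnd ℂ) (f x) * g x

/-- The canonical orthonormal basis vector `δ_x / √(w x)` of `ℓ²_w(X)`. -/
noncomputable def ebasis {X : Type*} [DecidableEq X] (w : X → ℝ) (x : X) : X → ℂ :=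
  fun y => if y = x then ((Real.sqrt (w x) : ℂ))⁻¹ else 0

lemma winner_diag {X : Type*} [DecidableEq X] (w : X → ℝ) (x : X) (hx : 0 < w x)
    (f : X → ℂ) : winner w (fun y => ebasis w x y * ebasis w x y) f = f x := by
  have h : ∀ y : X, y ≠ x →
      (w y : ℂ) * (starRingEnd ℂ) (ebasis w x y * ebasis w x y) * f y = 0 := by
    intro y hy
    simp [ebasis, hy]
  rw [winner, tsum_eq_single x h]
  have hs : ((Real.sqrt (w x) : ℂ))⁻¹ * ((Real.sqrt (w x) : ℂ))⁻¹ = ((w x : ℂ))⁻¹ := by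
    rw [← mul_inv]
    norm_cast
    rw [Real.mul_self_sqrt hx.le]
  simp only [ebasis, if_pos, map_mul, map_inv₀, Complex.conj_ofReal, hs]
  rw [mul_inv_cancel₀ (by exact_mod_cast hx.ne'), one_mul]

lemma winner_off {X : Type*} [DecidableEq X] (w : X → ℝ) {x y : X} (hxy : x ≠ y)
    (f : X → ℂ) : winner w (fun z => ebasis w x z * ebasis w y z) f = 0 := by
  have h : ∀ z : X, ebasis w x z * ebasis w y z = 0 := by
    intro z
    by_cases hzy : z = y
    · have hzx : z ≠ x := fun h => hxy (h ▸ hzy)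
      simp [ebasis, hzx]
    · simp [ebasis, hzy]
  simp only [winner]
  convert tsum_zero with z
  rw [h z]
  simp

lemma winner_delta {X : Type*} [DecidableEq X] (w : X → ℝ) (x : X) (hx : w x ≠ 0)
    (f : X → ℂ) :
    winner w (fun y => if y = x then ((w x : ℂ))⁻¹ else 0) f = f x := by
  have h : ∀ y : X, y ≠ x →
      (w y : ℂ) * (starRingEnd ℂ) (if y = x then ((w x : ℂ))⁻¹ else 0) * f y = 0 := by
    intro y hy; simp [hy]
  rw [winner, tsum_eq_single x h]
  simp only [if_pos, map_inv₀, Complex.conj_ofReal]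
  rw [mul_inv_cancel₀ (by exact_mod_cast hx), one_mul]

lemma winner_ind {X : Type*} [DecidableEq X] (w : X → ℝ) (x : X) (u : X → ℂ) :
    winner w u (fun y => if y = x then (1:ℂ) else 0) = (w x : ℂ) * (starRingEnd ℂ) (u x) := by
  have h : ∀ y : X, y ≠ x →
      (w y : ℂ) * (starRingEnd ℂ) (u y) * (if y = x then (1:ℂ) else 0) = 0 := by
    intro y hy; simp [hy]
  rw [winner, tsum_eq_single x h]
  simp

lemma memL2w_ind {X : Type*} [DecidableEq X] (w : X → ℝ) (x : X) (c : ℂ) :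
    MemL2w w (fun y => if y = x then c else 0) := by
  apply summable_of_ne_finset_zero (s := {x})
  intro b hb
  simp only [Finset.mem_singleton] at hb
  simp [hb]
/-- For `w : X → [C,∞)`, `C > 0`, pointwise multiplication on
`ℓ²_w(X)` is a weak Hilbert–Schmidt bilinear map, the induced `μ_X` is bounded with
`‖μ_X‖ ≤ C^{-1/2}`, and the group-like elements of `(ℓ²_w(X), μ_X)` — the nonzero `u`
with `⟨u, fg⟩_w = ⟨u, f⟩_w ⟨u, g⟩_w` for all `f, g ∈ ℓ²_w(X)` — are exactly the
functions `δ_x / w x`, `x ∈ X`. -/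
theorem stmt_15 {X : Type*} [Nonempty X] [DecidableEq X] (w : X → ℝ) (C : ℝ) (hC : 0 < C)
    (hw : ∀ x, C ≤ w x) :
    (∀ f : X → ℂ, MemL2w w f →
      Summable (fun p : X × X =>
        ‖winner w (fun y => ebasis w p.1 y * ebasis w p.2 y) f‖ ^ 2) ∧
      (∑' p : X × X,
          ‖winner w (fun y => ebasis w p.1 y * ebasis w p.2 y) f‖ ^ 2) ≤
        C⁻¹ * ∑' x, w x * ‖f x‖ ^ 2) ∧
    (∀ f g : X → ℂ, MemL2w w f → MemL2w w g →
      MemL2w w (fun y => f y * g y) ∧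
      Real.sqrt (∑' x, w x * ‖f x * g x‖ ^ 2) ≤
        (Real.sqrt C)⁻¹ *
          (Real.sqrt (∑' x, w x * ‖f x‖ ^ 2) * Real.sqrt (∑' x, w x * ‖g x‖ ^ 2))) ∧
    ({u : X → ℂ | MemL2w w u ∧ u ≠ 0 ∧
        ∀ f g : X → ℂ, MemL2w w f → MemL2w w g →
          winner w u (fun y => f y * g y) = winner w u f * winner w u g} =
      {u : X → ℂ | ∃ x : X, u = fun y => if y = x then ((w x : ℂ))⁻¹ else 0}) := by
  have hwpos : ∀ x, 0 < w x := fun x => lt_of_lt_of_le hC (hw x)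
  have hterm_le : ∀ (f : X → ℂ) (x : X), ‖f x‖ ^ 2 ≤ C⁻¹ * (w x * ‖f x‖ ^ 2) := by
    intro f x
    rw [show C⁻¹ * (w x * ‖f x‖ ^ 2) = (C⁻¹ * w x) * ‖f x‖ ^ 2 by ring]
    nth_rewrite 1 [show ‖f x‖ ^ 2 = 1 * ‖f x‖ ^ 2 by ring]
    apply mul_le_mul_of_nonneg_right _ (by positivity)
    calc (1:ℝ) = C⁻¹ * C := by field_simp
      _ ≤ C⁻¹ * w x := mul_le_mul_of_nonneg_left (hw x) (by positivity)
  refine ⟨?_, ?_, ?_⟩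
  · -- Part 1
    intro f hf
    set F : X × X → ℝ := fun p => ‖winner w (fun y => ebasis w p.1 y * ebasis w p.2 y) f‖ ^ 2
      with hF
    have hFeq : ∀ p : X × X, F p = if p.1 = p.2 then ‖f p.1‖ ^ 2 else 0 := by
      intro p
      by_cases h : p.1 = p.2
      · simp only [hF, if_pos h]
        rw [show (fun y => ebasis w p.1 y * ebasis w p.2 y) =
          (fun y => ebasis w p.1 y * ebasis w p.1 y) by rw [h]]
        rw [winner_diag w p.1 (hwpos p.1) f]
      · simp only [hF, if_neg h, winner_off w h f, norm_zero]
        norm_num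
    have hdiag : Function.Injective (fun x : X => ((x, x) : X × X)) := by
      intro a b hab; exact congrArg Prod.fst hab
    have hsupp : ∀ p ∉ Set.range (fun x : X => ((x, x) : X × X)), F p = 0 := by
      intro p hp
      rw [hFeq]
      rw [if_neg]
      intro h
      exact hp ⟨p.1, by rw [Prod.ext_iff]; exact ⟨rfl, h⟩⟩
    have hnsum : Summable (fun x => ‖f x‖ ^ 2) :=
      Summable.of_nonneg_of_le (fun x => by positivity) (hterm_le f) (hf.mul_left C⁻¹)
    have hFsum : Summable F := by
      rw [← hdiag.summable_iff hsupp]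
      have : (F ∘ fun x : X => ((x, x) : X × X)) = fun x => ‖f x‖ ^ 2 := by
        funext x; simp [Function.comp, hFeq]
      rw [this]
      exact hnsum
    refine ⟨hFsum, ?_⟩
    have hsupp' : Function.support F ⊆ Set.range (fun x : X => ((x, x) : X × X)) := by
      intro p hp
      by_contra h
      exact hp (hsupp p h)
    have htsum : ∑' p : X × X, F p = ∑' x, ‖f x‖ ^ 2 := by
      rw [← hdiag.tsum_eq hsupp']
      exact tsum_congr fun x => by simp [hFeq]
    rw [htsum, ← tsum_mul_left]
    exact Summable.tsum_le_tsum (hterm_le f) hnsum (hf.mul_left C⁻¹)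
  · -- Part 2
    intro f g hf hg
    set B := ∑' x, w x * ‖g x‖ ^ 2 with hB
    have hBnn : 0 ≤ B := tsum_nonneg fun x => mul_nonneg (hwpos x).le (by positivity)
    have hle : ∀ x, w x * ‖f x * g x‖ ^ 2 ≤ (C⁻¹ * B) * (w x * ‖f x‖ ^ 2) := by
      intro x
      have h1 : ‖g x‖ ^ 2 ≤ C⁻¹ * B := by
        have h2 : w x * ‖g x‖ ^ 2 ≤ B :=
          Summable.le_tsum hg x fun j _ => mul_nonneg (hwpos j).le (by positivity)
        have h3 : C * ‖g x‖ ^ 2 ≤ w x * ‖g x‖ ^ 2 :=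
          mul_le_mul_of_nonneg_right (hw x) (by positivity)
        calc ‖g x‖ ^ 2 = C⁻¹ * (C * ‖g x‖ ^ 2) := by field_simp
          _ ≤ C⁻¹ * B := mul_le_mul_of_nonneg_left (h3.trans h2) (by positivity)
      calc w x * ‖f x * g x‖ ^ 2 = (w x * ‖f x‖ ^ 2) * ‖g x‖ ^ 2 := by
            rw [norm_mul]; ring
        _ ≤ (w x * ‖f x‖ ^ 2) * (C⁻¹ * B) :=
            mul_le_mul_of_nonneg_left h1 (mul_nonneg (hwpos x).le (by positivity))
        _ = (C⁻¹ * B) * (w x * ‖f x‖ ^ 2) := by ring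
    have hsum : MemL2w w (fun y => f y * g y) :=
      Summable.of_nonneg_of_le
        (fun x => mul_nonneg (hwpos x).le (by positivity)) hle (hf.mul_left _)
    refine ⟨hsum, ?_⟩
    have htle : (∑' x, w x * ‖f x * g x‖ ^ 2) ≤ C⁻¹ * ((∑' x, w x * ‖f x‖ ^ 2) * B) := by
      calc (∑' x, w x * ‖f x * g x‖ ^ 2) ≤ ∑' x, (C⁻¹ * B) * (w x * ‖f x‖ ^ 2) :=
            Summable.tsum_le_tsum hle hsum (hf.mul_left _)
        _ = (C⁻¹ * B) * ∑' x, w x * ‖f x‖ ^ 2 := tsum_mul_left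
        _ = C⁻¹ * ((∑' x, w x * ‖f x‖ ^ 2) * B) := by ring
    calc Real.sqrt (∑' x, w x * ‖f x * g x‖ ^ 2)
        ≤ Real.sqrt (C⁻¹ * ((∑' x, w x * ‖f x‖ ^ 2) * B)) := Real.sqrt_le_sqrt htle
      _ = (Real.sqrt C)⁻¹ * (Real.sqrt (∑' x, w x * ‖f x‖ ^ 2) * Real.sqrt B) := by
          rw [Real.sqrt_mul (by positivity),
            Real.sqrt_mul (tsum_nonneg fun x => mul_nonneg (hwpos x).le (by positivity)),
            Real.sqrt_inv]
  · -- Part 3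
    ext u
    simp only [Set.mem_setOf_eq]
    constructor
    · rintro ⟨hu, hne, hmul⟩
      have key : ∀ x : X, (w x : ℂ) * (starRingEnd ℂ) (u x) = 0 ∨
          (w x : ℂ) * (starRingEnd ℂ) (u x) = 1 := by
        intro x
        have h := hmul (fun y => if y = x then 1 else 0) (fun y => if y = x then 1 else 0)
          (memL2w_ind w x 1) (memL2w_ind w x 1)
        have heq : (fun y => (if y = x then (1:ℂ) else 0) * (if y = x then (1:ℂ) else 0)) =
            (fun y => if y = x then (1:ℂ) else 0) := by
          funext y; by_cases hy : y = x <;> simp [hy]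
        rw [heq, winner_ind] at h
        have hfac : ((w x : ℂ) * (starRingEnd ℂ) (u x)) *
            ((w x : ℂ) * (starRingEnd ℂ) (u x) - 1) = 0 := by
          linear_combination -h
        rcases mul_eq_zero.mp hfac with h1 | h1
        · exact Or.inl h1
        · exact Or.inr (by linear_combination h1)
      have cross : ∀ x y : X, x ≠ y →
          ((w x : ℂ) * (starRingEnd ℂ) (u x)) * ((w y : ℂ) * (starRingEnd ℂ) (u y)) = 0 := by
        intro x y hxy
        have h := hmul (fun z => if z = x then 1 else 0) (fun z => if z = y then 1 else 0)
          (memL2w_ind w x 1) (memL2w_ind w y 1)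
        rw [winner_ind, winner_ind] at h
        have heq : (fun z => (if z = x then (1:ℂ) else 0) * (if z = y then (1:ℂ) else 0)) =
            (fun _ : X => (0:ℂ)) := by
          funext z
          by_cases hz : z = x
          · simp [hz, hxy]
          · simp [hz]
        rw [heq] at h
        rw [← h, winner]
        convert tsum_zero with z
        simp
      obtain ⟨x₀, hx₀⟩ : ∃ x, u x ≠ 0 := by
        by_contra h
        push_neg at h
        exact hne (funext h)
      have hx₀1 : (w x₀ : ℂ) * (starRingEnd ℂ) (u x₀) = 1 := by
        rcases key x₀ with h | h
        · exfalso
          rcases mul_eq_zero.mp h with h1 | h1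
          · exact (hwpos x₀).ne' (by exact_mod_cast h1)
          · exact hx₀ (by simpa using h1)
        · exact h
      refine ⟨x₀, funext fun y => ?_⟩
      by_cases hy : y = x₀
      · subst hy
        rw [if_pos rfl]
        have hwne : (w y : ℂ) ≠ 0 := by exact_mod_cast (hwpos y).ne'
        have h4 : (starRingEnd ℂ) (u y) = ((w y : ℂ))⁻¹ := by
          field_simp at hx₀1 ⊢
          linear_combination hx₀1
        calc u y = (starRingEnd ℂ) ((starRingEnd ℂ) (u y)) := (Complex.conj_conj _).symm
          _ = (starRingEnd ℂ) ((w y : ℂ))⁻¹ := by rw [h4]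
          _ = ((w y : ℂ))⁻¹ := by rw [map_inv₀, Complex.conj_ofReal]
      · rw [if_neg hy]
        have h := cross y x₀ hy
        rw [hx₀1, mul_one] at h
        rcases mul_eq_zero.mp h with h1 | h1
        · exact absurd (by exact_mod_cast h1 : w y = 0) (hwpos y).ne'
        · simpa using h1
    · rintro ⟨x, rfl⟩
      have hwne : w x ≠ 0 := (hwpos x).ne'
      refine ⟨memL2w_ind w x _, ?_, ?_⟩
      · intro h
        have := congrFun h x
        simp only [if_pos rfl, Pi.zero_apply] at this
        exact (inv_ne_zero (by exact_mod_cast hwne : (w x : ℂ) ≠ 0)) this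
      · intro f g hf hg
        rw [winner_delta w x hwne, winner_delta w x hwne, winner_delta w x hwne]
end

section
/- Let X be a nonempty set, x₀ ∈ X, and define the multiplication μ on ℓ²(X) by μ(u ⊗ v) = v(x₀)·u. Then (ℓ²(X), μ) is an associative Hilbertian semigroup satisfying the Frobenius condition, with μ†(u) = u ⊗ δ_{x₀}, μ ∘ μ† = id (special), its only group-like element is δ_{x₀}, its annihilator is {0}, and it is non-commutative whenever X has at least two elements. -/
open scoped ComplexInnerProductSpace

/-- `τ : H × H → T` realizes `T` as the Hilbertian tensor product `H ⊗₂ H`. -/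
structure IsHilbertTensorProduct {H T : Type*}
    [NormedAddCommGroup H] [InnerProductSpace ℂ H]
    [NormedAddCommGroup T] [InnerProductSpace ℂ T]
    (τ : H →L[ℂ] H →L[ℂ] T) : Prop where
  inner_mul : ∀ a b c d : H, ⟪τ a b, τ c d⟫ = ⟪a, c⟫ * ⟪b, d⟫
  dense_span :
    (Submodule.span ℂ (Set.range fun p : H × H => τ p.1 p.2)).topologicalClosure = ⊤

/-- On `ℓ²(X)` with `x₀ ∈ X`, the multiplication
`μ(u ⊗ v) = v(x₀)·u` is associative and satisfies the Frobenius condition (both cells,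
here written out on elementary tensors using `μ†(u) = u ⊗ δ_{x₀}`), `μ† u = u ⊗ δ_{x₀}`,
`μ ∘ μ† = id` (special), the only group-like element is `δ_{x₀}`, the annihilator is
`{0}`, and the multiplication is non-commutative as soon as `X` has two elements. -/
theorem stmt_19 {X : Type*} [DecidableEq X] (x₀ : X) {T : Type*}
    [NormedAddCommGroup T] [InnerProductSpace ℂ T] [CompleteSpace T]
    (τ : lp (fun _ : X => ℂ) 2 →L[ℂ] lp (fun _ : X => ℂ) 2 →L[ℂ] T)
    (hτ : IsHilbertTensorProduct τ)
    (μ : T →L[ℂ] lp (fun _ : X => ℂ) 2)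
    (hμ : ∀ u v : lp (fun _ : X => ℂ) 2, μ (τ u v) = v x₀ • u) :
    (∀ u v w : lp (fun _ : X => ℂ) 2,
      μ (τ (μ (τ u v)) w) = μ (τ u (μ (τ v w)))) ∧
    (∀ u v : lp (fun _ : X => ℂ) 2,
      ContinuousLinearMap.adjoint μ (μ (τ u v)) =
        τ u (μ (τ (lp.single 2 x₀ (1 : ℂ)) v))) ∧
    (∀ u v : lp (fun _ : X => ℂ) 2,
      ContinuousLinearMap.adjoint μ (μ (τ u v)) =
        τ (μ (τ u v)) (lp.single 2 x₀ (1 : ℂ))) ∧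
    (∀ u : lp (fun _ : X => ℂ) 2,
      ContinuousLinearMap.adjoint μ u = τ u (lp.single 2 x₀ (1 : ℂ))) ∧
    μ.comp (ContinuousLinearMap.adjoint μ) = ContinuousLinearMap.id ℂ _ ∧
    ({u : lp (fun _ : X => ℂ) 2 | u ≠ 0 ∧ ContinuousLinearMap.adjoint μ u = τ u u} =
      {lp.single 2 x₀ (1 : ℂ)}) ∧
    (∀ u : lp (fun _ : X => ℂ) 2,
      (∀ v : lp (fun _ : X => ℂ) 2, μ (τ u v) = 0 ∧ μ (τ v u) = 0) → u = 0) ∧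
    ((∃ x : X, x ≠ x₀) →
      ∃ u v : lp (fun _ : X => ℂ) 2, μ (τ u v) ≠ μ (τ v u)) := by
  classical
  set δ : lp (fun _ : X => ℂ) 2 := lp.single 2 x₀ (1 : ℂ) with hδ
  have hδx : δ x₀ = 1 := by rw [hδ]; exact lp.single_apply_self (E := fun _ : X => ℂ) 2 x₀ (1 : ℂ)
  have hδinner : ∀ b : lp (fun _ : X => ℂ) 2, ⟪δ, b⟫ = b x₀ := by
    intro b
    have h := lp.inner_single_left (𝕜 := ℂ) (G := fun _ : X => ℂ) x₀ (1 : ℂ) b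
    rw [hδ, h]
    simp [RCLike.inner_apply]
  -- the adjoint formula
  have hadj : ∀ u : lp (fun _ : X => ℂ) 2,
      ContinuousLinearMap.adjoint μ u = τ u δ := by
    intro u
    have hdense : Dense ((Submodule.span ℂ
        (Set.range fun p : lp (fun _ : X => ℂ) 2 × lp (fun _ : X => ℂ) 2 =>
          τ p.1 p.2) : Submodule ℂ T) : Set T) := by
      rw [Submodule.dense_iff_topologicalClosure_eq_top]
      exact hτ.dense_span
    have key : (innerSL ℂ (ContinuousLinearMap.adjoint μ u) : T →L[ℂ] ℂ) =
        innerSL ℂ (τ u δ) := by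
      apply ContinuousLinearMap.ext_on hdense
      rintro t ⟨⟨a, b⟩, rfl⟩
      simp only [innerSL_apply_apply]
      rw [ContinuousLinearMap.adjoint_inner_left, hμ, inner_smul_right,
        hτ.inner_mul, hδinner]
      ring
    have := congr_arg (fun F : T →L[ℂ] ℂ =>
      F (ContinuousLinearMap.adjoint μ u - τ u δ)) key
    simp only [innerSL_apply_apply, inner_sub_right] at this
    have h0 : ⟪ContinuousLinearMap.adjoint μ u - τ u δ,
        ContinuousLinearMap.adjoint μ u - τ u δ⟫ = 0 := by
      rw [inner_sub_right, inner_sub_left, inner_sub_left]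
      linear_combination this
    exact sub_eq_zero.mp (inner_self_eq_zero.mp h0)
  have hsmul : ∀ (c : ℂ) (v : lp (fun _ : X => ℂ) 2) (y : X), (c • v) y = c * v y := by
    intro c v y; rfl
  refine ⟨?_, ?_, ?_, hadj, ?_, ?_, ?_, ?_⟩
  · intro u v w
    rw [hμ, hμ, hμ, hμ, hsmul _ _ x₀, smul_smul]
  · intro u v
    rw [hadj, hμ, hμ, map_smul, ContinuousLinearMap.smul_apply, map_smul]
  · intro u v
    exact hadj _
  · ext u
    simp only [ContinuousLinearMap.comp_apply, ContinuousLinearMap.id_apply]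
    rw [hadj, hμ, hδx, one_smul]
  · ext u
    simp only [Set.mem_setOf_eq, Set.mem_singleton_iff]
    constructor
    · rintro ⟨hu, heq⟩
      rw [hadj] at heq
      have h0 : τ u (u - δ) = 0 := by
        rw [map_sub, heq, sub_self]
      have hin : ⟪τ u (u - δ), τ u (u - δ)⟫ = 0 := by rw [h0]; simp
      rw [hτ.inner_mul] at hin
      rcases mul_eq_zero.mp hin with h | h
      · exact absurd (inner_self_eq_zero.mp h) hu
      · have := sub_eq_zero.mp (inner_self_eq_zero.mp h)
        rw [this]
    · rintro rfl
      refine ⟨fun h => ?_, hadj δ⟩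
      rw [h] at hδx
      simp at hδx
  · intro u h
    have := (h δ).1
    rw [hμ, hδx, one_smul] at this
    exact this
  · rintro ⟨x, hx⟩
    set e : lp (fun _ : X => ℂ) 2 := lp.single 2 x (1 : ℂ) with he
    refine ⟨e, δ, ?_⟩
    rw [hμ, hμ, hδx, one_smul]
    intro h
    have h1 : e x = ((e x₀ • δ : lp (fun _ : X => ℂ) 2)) x := by rw [← h]
    have hex : e x = 1 := by rw [he]; exact lp.single_apply_self (E := fun _ : X => ℂ) 2 x (1 : ℂ)
    have hx0 : e x₀ = 0 := by
      rw [he]; exact lp.single_apply_ne (E := fun _ : X => ℂ) 2 x (1 : ℂ) (Ne.symm hx)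
    rw [hex, hsmul _ _ x, hx0, zero_mul] at h1
    exact one_ne_zero h1
end
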